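/- Let A and B be DG free algebras on n degree-one generators with differentials determined by crisscross n-tuples (M^1,...,M^n) and (N^1,...,N^n) respectively. Then A and B are isomorphic as DG algebras if and only if there exists an invertible matrix A = (a_{ij}) ∈ GL_n(k) such that ∑_{j=1}^n a_{ij} N^j = Aᵀ M^i A for every i ∈ {1,...,n}. -/

import Mathlib

/-! A graded automorphism `f` of `k⟨x₁,…,xₙ⟩` preserves degree one, so it is the linear
substitution `xᵢ ↦ ∑ⱼ aᵢⱼ xⱼ` of a matrix `A`, invertible since `f` is injective. Applying `f` to
`∂₁ xᵢ = ∑ Mⁱ_{ab} x_a x_b` gives the quadratic element of `Aᵀ Mⁱ A`, while `∂₂ (f xᵢ)` is that of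
`∑ⱼ aᵢⱼ Nʲ`; the monomials `x_a x_b` are linearly independent, so `f ∂₁ = ∂₂ f` on generators is
exactly the matrix identity. Conversely, for invertible `A` the substitution is a graded
automorphism, and agreement of `f ∂₁` and `∂₂ f` on generators propagates to every element
because both satisfy the Leibniz rule with the sign of a degree-one left factor. -/

open Matrix

/-- The degree-`i` homogeneous component of the free algebra `k⟨x_1,...,x_n⟩`
with all generators in degree `1`: the span of the words of length `i`. -/
noncomputable def deg (k : Type*) [CommRing k] (n : ℕ) (i : ℕ) :
    Submodule k (FreeAlgebra k (Fin n)) :=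
  Submodule.span k
    {w | ∃ f : Fin i → Fin n, w = (List.ofFn fun j => FreeAlgebra.ι k (f j)).prod}

/-- An ordered `n`-tuple `(M^1,…,M^n)` of `n×n` matrices is *crisscross* if
`∑_{l=1}^n [c_j^l r_l^i − c_l^i r_j^l] = 0` for all `i,j`, where `c^i_j` (resp.
`r^i_j`) is the `j`-th column (resp. row) of `M^i`; entrywise this reads
`∑_l (M^l_{a j} M^i_{l b} − M^i_{a l} M^l_{j b}) = 0` for all `i,j,a,b`. -/
def crisscross {k : Type*} [CommRing k] {n : ℕ}
    (M : Fin n → Matrix (Fin n) (Fin n) k) : Prop :=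
  ∀ i j a b : Fin n,
    ∑ l : Fin n, (M l a j * M i l b - M i a l * M l j b) = 0

namespace FreeAlgebra

variable {R X : Type*} [CommRing R]

theorem eq_top_of_one_mem_of_ι_mul_mem (S : Submodule R (FreeAlgebra R X)) (h1 : 1 ∈ S)
    (hι : ∀ i, ∀ w ∈ S, ι R i * w ∈ S) : S = ⊤ := by
  -- the elements multiplying `S` into itself form a subalgebra containing the generators
  suffices h : ∀ a : FreeAlgebra R X, ∀ w ∈ S, a * w ∈ S from
    eq_top_iff.2 fun a _ => by simpa using h a 1 h1
  intro a
  induction a with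
  | grade0 r => intro w hw; simpa [Algebra.algebraMap_eq_smul_one] using S.smul_mem r hw
  | grade1 i => exact hι i
  | add a b ha hb => intro w hw; rw [add_mul]; exact add_mem (ha w hw) (hb w hw)
  | mul a b ha hb => intro w hw; rw [mul_assoc]; exact ha _ (hb w hw)

theorem linearIndependent_ι : LinearIndependent R (ι R : X → FreeAlgebra R X) := by
  convert (basisFreeMonoid R X).linearIndependent.comp _ FreeMonoid.of_injective
  funext; simp [basisFreeMonoid, equivMonoidAlgebraFreeMonoid]

theorem linearIndependent_ι_mul_ι :
    LinearIndependent R (fun p : X × X => ι R p.1 * ι R p.2) := by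
  have hinj : Function.Injective fun p : X × X => FreeMonoid.of p.1 * FreeMonoid.of p.2 := by
    rintro ⟨a, b⟩ ⟨a', b'⟩ h
    simpa using congrArg FreeMonoid.toList h
  convert (basisFreeMonoid R X).linearIndependent.comp _ hinj
  simp [basisFreeMonoid, equivMonoidAlgebraFreeMonoid]

variable [Fintype X]

def quadratic : Matrix X X R →ₗ[R] FreeAlgebra R X where
  toFun Q := ∑ a, ∑ b, Q a b • (ι R a * ι R b)
  map_add' P Q := by simp only [Matrix.add_apply, add_smul, Finset.sum_add_distrib]
  map_smul' r Q := by simp only [Matrix.smul_apply, smul_assoc, Finset.smul_sum, RingHom.id_apply]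

theorem quadratic_apply (Q : Matrix X X R) : quadratic Q = ∑ a, ∑ b, Q a b • (ι R a * ι R b) := rfl

theorem quadratic_injective : Function.Injective (quadratic : Matrix X X R → FreeAlgebra R X) := by
  intro P Q h
  have := linearIndependent_ι_mul_ι.fintypeLinearCombination_injective
    (a₁ := fun p => P p.1 p.2) (a₂ := fun p => Q p.1 p.2)
    (by simpa [Fintype.linearCombination_apply, Fintype.sum_prod_type, quadratic_apply] using h)
  ext a b
  exact congrFun this (a, b)

def linearSubst (A : Matrix X X R) : FreeAlgebra R X →ₐ[R] FreeAlgebra R X :=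
  lift R fun i => ∑ j, A i j • ι R j

@[simp]
theorem linearSubst_ι (A : Matrix X X R) (i : X) : linearSubst A (ι R i) = ∑ j, A i j • ι R j :=
  lift_ι_apply _ _

theorem linearSubst_sum_smul_ι (A : Matrix X X R) (v : X → R) :
    linearSubst A (∑ i, v i • ι R i) = ∑ j, (v ᵥ* A) j • ι R j := by
  simp only [map_sum, map_smul, linearSubst_ι, Finset.smul_sum, smul_smul, vecMul, dotProduct,
    Finset.sum_smul]
  exact Finset.sum_comm

theorem linearSubst_comp (A B : Matrix X X R) :
    (linearSubst A).comp (linearSubst B) = linearSubst (B * A) := by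
  ext i
  simpa [mul_apply, vecMul, dotProduct] using linearSubst_sum_smul_ι A (B i)

theorem linearSubst_one [DecidableEq X] : linearSubst (1 : Matrix X X R) = AlgHom.id R _ := by
  ext i
  simp [one_apply, ite_smul]

theorem linearSubst_ι_mul_ι (A : Matrix X X R) (a b : X) :
    linearSubst A (ι R a * ι R b) = quadratic (vecMulVec (A a) (A b)) := by
  simp only [map_mul, linearSubst_ι, Finset.sum_mul_sum, smul_mul_smul_comm, quadratic_apply,
    vecMulVec_apply]

theorem transpose_mul_mul_eq_sum (A Q : Matrix X X R) :
    Aᵀ * Q * A = ∑ a, ∑ b, Q a b • vecMulVec (A a) (A b) := by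
  ext c d
  simp only [mul_apply, transpose_apply, Finset.sum_mul, Matrix.sum_apply, Matrix.smul_apply,
    vecMulVec_apply, smul_eq_mul]
  rw [Finset.sum_comm]
  exact Finset.sum_congr rfl fun _ _ => Finset.sum_congr rfl fun _ _ => by ring

theorem linearSubst_quadratic (A Q : Matrix X X R) :
    linearSubst A (quadratic Q) = quadratic (Aᵀ * Q * A) := by
  rw [quadratic_apply Q, transpose_mul_mul_eq_sum]
  simp only [map_sum, map_smul, linearSubst_ι_mul_ι]

theorem linearSubst_intertwines_ι_iff {d₁ d₂ : FreeAlgebra R X →ₗ[R] FreeAlgebra R X}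
    {M N : X → Matrix X X R} (hd₁ : ∀ i, d₁ (ι R i) = quadratic (M i))
    (hd₂ : ∀ i, d₂ (ι R i) = quadratic (N i)) (A : Matrix X X R) (i : X) :
    linearSubst A (d₁ (ι R i)) = d₂ (linearSubst A (ι R i)) ↔ ∑ j, A i j • N j = Aᵀ * M i * A := by
  have hd₂_comb : d₂ (∑ j, A i j • ι R j) = quadratic (∑ j, A i j • N j) := by simp [hd₂]
  rw [hd₁, linearSubst_quadratic, linearSubst_ι, hd₂_comb, quadratic_injective.eq_iff, eq_comm]

variable [DecidableEq X]

noncomputable def linearSubstEquiv (A : Matrix X X R) (hA : IsUnit A.det) :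
    FreeAlgebra R X ≃ₐ[R] FreeAlgebra R X :=
  .ofAlgHom (linearSubst A) (linearSubst A⁻¹)
    (by rw [linearSubst_comp, nonsing_inv_mul A hA, linearSubst_one])
    (by rw [linearSubst_comp, mul_nonsing_inv A hA, linearSubst_one])

theorem isUnit_det_of_injective_linearSubst {K : Type*} [Field K] {A : Matrix X X K}
    (h : Function.Injective (linearSubst A)) : IsUnit A.det := by
  rw [← isUnit_iff_isUnit_det, ← vecMul_injective_iff_isUnit]
  intro v w hvw
  apply linearIndependent_ι.fintypeLinearCombination_injective
  apply h
  simp only [Fintype.linearCombination_apply, linearSubst_sum_smul_ι, hvw]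

end FreeAlgebra

open FreeAlgebra Submodule

section Graded

variable {k : Type*} [CommRing k] {n : ℕ}

theorem deg_eq_span_pow (i : ℕ) : deg k n i = span k (Set.range (ι k)) ^ i := by
  rw [span_pow, deg]
  congr 1
  ext w
  rw [Set.mem_pow]
  constructor
  · rintro ⟨f, rfl⟩
    exact ⟨fun j => ⟨_, f j, rfl⟩, rfl⟩
  · rintro ⟨g, rfl⟩
    choose f hf using fun j => (g j).2
    exact ⟨f, by simp [hf]⟩

theorem deg_one : deg k n 1 = span k (Set.range (ι k)) := by
  rw [deg_eq_span_pow, pow_one]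

theorem ι_mem_deg_one (i : Fin n) : ι k i ∈ deg k n 1 :=
  deg_one (k := k) ▸ subset_span ⟨i, rfl⟩

theorem one_mem_deg_zero : (1 : FreeAlgebra k (Fin n)) ∈ deg k n 0 :=
  subset_span ⟨Fin.elim0, by simp⟩

theorem map_deg_le {f : FreeAlgebra k (Fin n) →ₐ[k] FreeAlgebra k (Fin n)}
    (hf : ∀ i, f (ι k i) ∈ deg k n 1) (p : ℕ) : (deg k n p).map f.toLinearMap ≤ deg k n p := by
  rw [deg_eq_span_pow, Submodule.map_pow]
  refine pow_le_pow_left' ?_ p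
  rw [map_span, span_le]
  rintro _ ⟨_, ⟨i, rfl⟩, rfl⟩
  exact deg_one (k := k) ▸ hf i

theorem exists_eq_linearSubst {f : FreeAlgebra k (Fin n) →ₐ[k] FreeAlgebra k (Fin n)}
    (hf : ∀ i, f (ι k i) ∈ deg k n 1) : ∃ A, f = linearSubst A := by
  choose c hc using fun i => (mem_span_range_iff_exists_fun k).1 (deg_one (k := k) ▸ hf i)
  exact ⟨Matrix.of c, by ext i; simp [hc]⟩

theorem linearSubst_ι_mem_deg_one (A : Matrix (Fin n) (Fin n) k) (i : Fin n) :
    linearSubst A (ι k i) ∈ deg k n 1 := by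
  rw [linearSubst_ι]
  exact sum_mem fun j _ => smul_mem _ _ (ι_mem_deg_one j)

def IsGradedDerivation (d : FreeAlgebra k (Fin n) →ₗ[k] FreeAlgebra k (Fin n)) : Prop :=
  ∀ (p : ℕ) (a b : FreeAlgebra k (Fin n)), a ∈ deg k n p →
    d (a * b) = d a * b + ((-1 : k) ^ p) • (a * d b)

namespace IsGradedDerivation

variable {d : FreeAlgebra k (Fin n) →ₗ[k] FreeAlgebra k (Fin n)}

theorem map_one (hd : IsGradedDerivation d) : d 1 = 0 := by
  simpa using hd 0 1 1 one_mem_deg_zero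

theorem map_mul_of_mem_deg_one (hd : IsGradedDerivation d) {x : FreeAlgebra k (Fin n)}
    (hx : x ∈ deg k n 1) (w : FreeAlgebra k (Fin n)) : d (x * w) = d x * w - x * d w := by
  simpa [sub_eq_add_neg] using hd 1 x w hx

end IsGradedDerivation

theorem intertwines_of_forall_ι {f : FreeAlgebra k (Fin n) →ₐ[k] FreeAlgebra k (Fin n)}
    (hf : ∀ i, f (ι k i) ∈ deg k n 1) {d₁ d₂ : FreeAlgebra k (Fin n) →ₗ[k] FreeAlgebra k (Fin n)}
    (hd₁ : IsGradedDerivation d₁) (hd₂ : IsGradedDerivation d₂)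
    (h : ∀ i, f (d₁ (ι k i)) = d₂ (f (ι k i))) (a : FreeAlgebra k (Fin n)) :
    f (d₁ a) = d₂ (f a) := by
  suffices LinearMap.eqLocus (f.toLinearMap ∘ₗ d₁) (d₂ ∘ₗ f.toLinearMap) = ⊤ from
    LinearMap.congr_fun (LinearMap.eqLocus_eq_top.1 this) a
  apply eq_top_of_one_mem_of_ι_mul_mem
  · simp [hd₁.map_one, hd₂.map_one]
  · intro i w hw
    simp only [LinearMap.mem_eqLocus, LinearMap.comp_apply, AlgHom.toLinearMap_apply] at hw ⊢
    rw [hd₁.map_mul_of_mem_deg_one (ι_mem_deg_one i), map_sub, map_mul, map_mul, map_mul,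
      hd₂.map_mul_of_mem_deg_one (hf i), h i, hw]

end Graded

theorem stmt2_general {k : Type*} [Field k] (n : ℕ)
    (M N : Fin n → Matrix (Fin n) (Fin n) k)
    (d1 d2 : FreeAlgebra k (Fin n) →ₗ[k] FreeAlgebra k (Fin n))
    (hL1 : ∀ (p : ℕ) (a b : FreeAlgebra k (Fin n)), a ∈ deg k n p →
      d1 (a * b) = d1 a * b + ((-1 : k) ^ p) • (a * d1 b))
    (hL2 : ∀ (p : ℕ) (a b : FreeAlgebra k (Fin n)), a ∈ deg k n p →
      d2 (a * b) = d2 a * b + ((-1 : k) ^ p) • (a * d2 b))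
    (hval1 : ∀ i, d1 (FreeAlgebra.ι k i) =
      ∑ a : Fin n, ∑ b : Fin n, M i a b • (FreeAlgebra.ι k a * FreeAlgebra.ι k b))
    (hval2 : ∀ i, d2 (FreeAlgebra.ι k i) =
      ∑ a : Fin n, ∑ b : Fin n, N i a b • (FreeAlgebra.ι k a * FreeAlgebra.ι k b)) :
    (∃ f : FreeAlgebra k (Fin n) ≃ₐ[k] FreeAlgebra k (Fin n),
      (∀ (i : ℕ), ∀ a ∈ deg k n i, f a ∈ deg k n i) ∧
      (∀ a, f (d1 a) = d2 (f a))) ↔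
    (∃ A : Matrix (Fin n) (Fin n) k, IsUnit A.det ∧
      ∀ i, (∑ j, A i j • N j) = Aᵀ * M i * A) := by
  have intertwines_iff := linearSubst_intertwines_ι_iff (d₁ := d1) (d₂ := d2) hval1 hval2
  constructor
  · rintro ⟨f, hdeg, hcomm⟩
    obtain ⟨A, hA⟩ := exists_eq_linearSubst (f := (f : _ →ₐ[k] _)) fun i =>
      hdeg 1 _ (ι_mem_deg_one i)
    refine ⟨A, isUnit_det_of_injective_linearSubst ?_, fun i => (intertwines_iff A i).1 ?_⟩
    · rw [← hA]
      exact f.injective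
    · rw [← hA]
      exact hcomm _
  · rintro ⟨A, hA, hAN⟩
    have hdeg := linearSubst_ι_mem_deg_one A
    refine ⟨linearSubstEquiv A hA, fun p a ha => map_deg_le hdeg p (mem_map_of_mem ha),
      intertwines_of_forall_ι hdeg hL1 hL2 fun i => (intertwines_iff A i).2 (hAN i)⟩

/-- let `A` and `B` be the DG free algebras on `n` degree-one
generators whose differentials `d₁, d₂` are determined by the crisscross
tuples `(M¹,…,Mⁿ)` and `(N¹,…,Nⁿ)`.  Then `A ≅ B` as DG algebras (i.e.
there is a graded algebra automorphism of the free algebra intertwining the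
differentials) iff there is `A ∈ GLₙ(k)` with `∑_j a_{ij} Nʲ = Aᵀ Mⁱ A` for
every `i`. -/
theorem stmt2 {k : Type*} [Field k] [CharZero k] [IsAlgClosed k] (n : ℕ)
    (M N : Fin n → Matrix (Fin n) (Fin n) k)
    (hM : crisscross M) (hN : crisscross N)
    (d1 d2 : FreeAlgebra k (Fin n) →ₗ[k] FreeAlgebra k (Fin n))
    (hL1 : ∀ (p : ℕ) (a b : FreeAlgebra k (Fin n)), a ∈ deg k n p →
      d1 (a * b) = d1 a * b + ((-1 : k) ^ p) • (a * d1 b))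
    (hL2 : ∀ (p : ℕ) (a b : FreeAlgebra k (Fin n)), a ∈ deg k n p →
      d2 (a * b) = d2 a * b + ((-1 : k) ^ p) • (a * d2 b))
    (hval1 : ∀ i, d1 (FreeAlgebra.ι k i) =
      ∑ a : Fin n, ∑ b : Fin n, M i a b • (FreeAlgebra.ι k a * FreeAlgebra.ι k b))
    (hval2 : ∀ i, d2 (FreeAlgebra.ι k i) =
      ∑ a : Fin n, ∑ b : Fin n, N i a b • (FreeAlgebra.ι k a * FreeAlgebra.ι k b)) :
    (∃ f : FreeAlgebra k (Fin n) ≃ₐ[k] FreeAlgebra k (Fin n),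
      (∀ (i : ℕ), ∀ a ∈ deg k n i, f a ∈ deg k n i) ∧
      (∀ a, f (d1 a) = d2 (f a))) ↔
    (∃ A : Matrix (Fin n) (Fin n) k, IsUnit A.det ∧
      ∀ i, (∑ j, A i j • N j) = Aᵀ * M i * A) :=
  stmt2_general n M N d1 d2 hL1 hL2 hval1 hval2
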